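/- arXiv:2212.04218 — 2 statements merged into one kernel-verified Lean document; each statement's English description precedes it below -/
import Mathlib

section
/- Two infinite words r and r' over Σ are stutter equivalent (r ∼ r') if and only if their shortest representatives coincide, i.e. iff the words obtained from their canonical block decompositions by replacing every finite block exponent by 1 are equal. -/
/-!
Infinite words over an alphabet `α` are functions `ℕ → α`.

`nextChange r i` is the least position `n > i` with `r n ≠ r i`
(the start of the next block of the canonical block decomposition,
when `i` is the start of a block), or `i` itself if `r` is constant
from position `i` on (the final, infinitely repeated block of an ω-word).
-/
noncomputable def nextChange {α : Type*} (r : ℕ → α) (i : ℕ) : ℕ :=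
  letI : DecidablePred fun n => i < n ∧ r n ≠ r i := Classical.decPred _
  letI : Decidable (∃ n, i < n ∧ r n ≠ r i) := Classical.propDecidable _
  if h : ∃ n, i < n ∧ r n ≠ r i then Nat.find h else i

/-- `blockStart r k` is the starting position of the `k`-th block of the
canonical block decomposition `r = a₀^{n₀} a₁^{n₁} …` (with `aᵢ ≠ aᵢ₊₁`);
for an ω-word it stabilizes at the start of the final, infinite block. -/
noncomputable def blockStart {α : Type*} (r : ℕ → α) : ℕ → ℕ
  | 0 => 0
  | k + 1 => nextChange r (blockStart r (k))

/-- `Shorter r r'` (`r ⪯ r'`): the canonical block decompositions of `r` and `r'`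
have the same sequence of block letters, are of the same type (the decomposition
becomes infinitely-repeating at the same block index, if at all), and every
finite block exponent of `r` is at most the corresponding exponent of `r'`. -/
def Shorter {α : Type*} (r r' : ℕ → α) : Prop :=
  (∀ k, r (blockStart r k) = r' (blockStart r' k)) ∧
  (∀ k, blockStart r (k + 1) = blockStart r k ↔ blockStart r' (k + 1) = blockStart r' k) ∧
  (∀ k, blockStart r (k + 1) - blockStart r k ≤ blockStart r' (k + 1) - blockStart r' k)

/-- Stutter equivalence: `r ∼ r'` iff some word is shorter than both. -/
def StutterEquiv {α : Type*} (r r' : ℕ → α) : Prop :=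
  ∃ r'', Shorter r'' r ∧ Shorter r'' r'

/-- The word obtained from the canonical block decomposition of `r` by
replacing every finite block exponent by `1`. -/
noncomputable def destutterWord {α : Type*} (r : ℕ → α) : ℕ → α :=
  fun k => r (blockStart r k)


section Aux
variable {α : Type*} (r : ℕ → α)

lemma nextChange_cases (i : ℕ) :
    nextChange r i = i ∨ (i < nextChange r i ∧ r (nextChange r i) ≠ r i) := by
  letI : DecidablePred fun n => i < n ∧ r n ≠ r i := Classical.decPred _
  letI : Decidable (∃ n, i < n ∧ r n ≠ r i) := Classical.propDecidable _
  unfold nextChange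
  split
  · next h => exact Or.inr ⟨(Nat.find_spec h).1, (Nat.find_spec h).2⟩
  · exact Or.inl rfl

lemma nextChange_of_succ_ne {i : ℕ} (h : r (i + 1) ≠ r i) : nextChange r i = i + 1 := by
  letI : DecidablePred fun n => i < n ∧ r n ≠ r i := Classical.decPred _
  letI : Decidable (∃ n, i < n ∧ r n ≠ r i) := Classical.propDecidable _
  unfold nextChange
  have hex : ∃ n, i < n ∧ r n ≠ r i := ⟨i + 1, Nat.lt_succ_self i, h⟩
  rw [dif_pos hex]
  exact le_antisymm (Nat.find_le ⟨Nat.lt_succ_self i, h⟩) (Nat.find_spec hex).1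

lemma nextChange_of_const {i : ℕ} (h : ∀ n, i < n → r n = r i) : nextChange r i = i := by
  letI : DecidablePred fun n => i < n ∧ r n ≠ r i := Classical.decPred _
  letI : Decidable (∃ n, i < n ∧ r n ≠ r i) := Classical.propDecidable _
  unfold nextChange
  rw [dif_neg]
  rintro ⟨n, hn, hne⟩
  exact hne (h n hn)

lemma blockStart_succ (k : ℕ) : blockStart r (k + 1) = nextChange r (blockStart r k) := rfl

lemma blockStart_stab {k : ℕ} (h : blockStart r (k + 1) = blockStart r k) :
    ∀ m, k ≤ m → blockStart r m = blockStart r k := by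
  intro m hm
  induction m, hm using Nat.le_induction with
  | base => rfl
  | succ m hm ih => rw [blockStart_succ, ih, ← blockStart_succ, h]

lemma blockStart_of_ne {k : ℕ} (h : blockStart r (k + 1) ≠ blockStart r k) :
    blockStart r k < blockStart r (k + 1) ∧ r (blockStart r (k + 1)) ≠ r (blockStart r k) := by
  rcases nextChange_cases r (blockStart r k) with h1 | h1
  · exact absurd h1 h
  · exact h1

lemma stab_iff (k : ℕ) :
    blockStart r (k + 1) = blockStart r k ↔ destutterWord r (k + 1) = destutterWord r k := by
  constructor
  · intro h
    show r (blockStart r (k + 1)) = r (blockStart r k)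
    rw [h]
  · intro h
    by_contra hne
    exact (blockStart_of_ne r hne).2 h

lemma shorter_destutter : Shorter (destutterWord r) r := by
  classical
  set s := destutterWord r with hs
  by_cases P : ∃ k, blockStart r (k + 1) = blockStart r k
  · -- ω-word case
    set K := Nat.find P with hKdef
    have hK : blockStart r (K + 1) = blockStart r K := Nat.find_spec P
    have hmin : ∀ k, k < K → blockStart r (k + 1) ≠ blockStart r k := fun k hk => Nat.find_min P hk
    have hbr : ∀ m, K ≤ m → blockStart r m = blockStart r K := blockStart_stab r hK
    have hsK : ∀ m, K ≤ m → s m = s K := by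
      intro m hm
      show r (blockStart r m) = r (blockStart r K)
      rw [hbr m hm]
    have hsne : ∀ k, k < K → s (k + 1) ≠ s k := fun k hk h => hmin k hk ((stab_iff r k).mpr h)
    have hbs : ∀ k, blockStart s k = min k K := by
      intro k
      induction k with
      | zero => simp [blockStart]
      | succ k ih =>
        rcases lt_or_ge k K with h | h
        · rw [blockStart_succ, ih, min_eq_left h.le, nextChange_of_succ_ne s (hsne k h)]
          omega
        · have hc : nextChange s K = K := nextChange_of_const s (fun n hn => hsK n hn.le)
          rw [blockStart_succ, ih, min_eq_right h, hc]
          omega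
    refine ⟨?_, ?_, ?_⟩
    · intro k
      rw [hbs k]
      rcases le_or_gt k K with h | h
      · rw [min_eq_left h]
        rfl
      · rw [min_eq_right h.le]
        show r (blockStart r K) = r (blockStart r k)
        rw [hbr k h.le]
    · intro k
      rw [hbs, hbs]
      rcases lt_or_ge k K with h | h
      · exact iff_of_false (by omega) (hmin k h)
      · refine iff_of_true (by omega) ?_
        rw [hbr (k + 1) (by omega), hbr k h]
    · intro k
      rw [hbs, hbs]
      rcases lt_or_ge k K with h | h
      · have := (blockStart_of_ne r (hmin k h)).1
        omega
      · omega
  · -- plain word case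
    push_neg at P
    have hsne : ∀ k, s (k + 1) ≠ s k := fun k h => (P k) ((stab_iff r k).mpr h)
    have hbs : ∀ k, blockStart s k = k := by
      intro k
      induction k with
      | zero => rfl
      | succ k ih => rw [blockStart_succ, ih, nextChange_of_succ_ne s (hsne k)]
    refine ⟨?_, ?_, ?_⟩
    · intro k
      rw [hbs k]
      rfl
    · intro k
      rw [hbs, hbs]
      exact iff_of_false (by omega) (P k)
    · intro k
      rw [hbs, hbs]
      have := (blockStart_of_ne r (P k)).1
      omega

end Aux

/-- Two words are stutter equivalent iff their shortest representatives
(obtained by replacing every finite block exponent by `1`) coincide. -/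
theorem stutterEquiv_iff_destutter_eq {α : Type*} [Finite α] (r r' : ℕ → α) :
    StutterEquiv r r' ↔ destutterWord r = destutterWord r' := by
  constructor
  · rintro ⟨r'', h1, h2⟩
    funext k
    show r (blockStart r k) = r' (blockStart r' k)
    rw [← h1.1 k, h2.1 k]
  · intro h
    refine ⟨destutterWord r, shorter_destutter r, ?_⟩
    rw [h]
    exact shorter_destutter r'
end

section
/- (Test for stutter insensitivity.) For every language L over Σ, sl(cl(L)) ⊆ L if and only if L is stutter insensitive; in that case sl(cl(L)) = L. -/
/-- A language (set of infinite words) is stutter insensitive iff it is closed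
under stutter equivalence. -/
def StutterInsensitive {α : Type*} (L : Set (ℕ → α)) : Prop :=
  ∀ r ∈ L, ∀ r', StutterEquiv r' r → r' ∈ L

/-- The closure of a language: all words shorter than some word of `L`. -/
def cl {α : Type*} (L : Set (ℕ → α)) : Set (ℕ → α) :=
  {r' | ∃ r ∈ L, Shorter r' r}

/-- The self-loopization of a language: all words longer than some word of `L`. -/
def sl {α : Type*} (L : Set (ℕ → α)) : Set (ℕ → α) :=
  {r' | ∃ r ∈ L, Shorter r r'}

lemma Shorter.refl {α : Type*} (r : ℕ → α) : Shorter r r :=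
  ⟨fun _ => rfl, fun _ => Iff.rfl, fun _ => le_rfl⟩

/-- Test for stutter insensitivity: `sl (cl L) ⊆ L` iff `L` is stutter
insensitive; in that case `sl (cl L) = L`. -/
theorem test_stutterInsensitive {α : Type*} [Finite α] (L : Set (ℕ → α)) :
    (sl (cl L) ⊆ L ↔ StutterInsensitive L) ∧
    (StutterInsensitive L → sl (cl L) = L) := by
  have hiff : sl (cl L) ⊆ L ↔ StutterInsensitive L := by
    constructor
    · intro h r hr r' ⟨r'', h1, h2⟩
      exact h ⟨r'', ⟨r, hr, h2⟩, h1⟩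
    · rintro h r' ⟨r'', ⟨r, hr, h1⟩, h2⟩
      exact h r hr r' ⟨r'', h2, h1⟩
  refine ⟨hiff, fun h => Set.Subset.antisymm (hiff.mpr h) ?_⟩
  intro r hr
  exact ⟨r, ⟨r, hr, Shorter.refl r⟩, Shorter.refl r⟩
end
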